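/- Let R be a commutative ring that is also a ℚ-algebra, and let {·,·} : R × R → R be a bilinear map that is antisymmetric and satisfies the Leibniz rule in each argument. Let N be a nonzero rational number, and let (I_n)_{n≥1}, (J_n)_{n≥1} be elements of R satisfying {I_n, I_m} = 0, {J_n, I_m} = (n+m−1)·I_{n+m−1}, and {J_n, J_m} = (m−n)·J_{n+m−1} for all n, m ≥ 1. Define q₀ = J₁ and J̃_{n+1} = J_{n+1} − (n/N)·q₀·I_n. Then for all n, m ≥ 1: {q₀, I_m} = m·I_m and {q₀, J̃_{n+1}} = n·J̃_{n+1}. -/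
import Mathlib


/-- The Poisson algebra of the second Calogero–Moser Poisson structure
is a semi-direct sum: brackets of the center-of-mass position `q₀ = J₁` with the
generators `I_m` and the modified generators `J̃_{n+1}`. -/
theorem stmt2 (R : Type*) [CommRing R] [Algebra ℚ R]
    (br : R →ₗ[ℚ] R →ₗ[ℚ] R)
    (br_anti : ∀ x y : R, br x y = - br y x)
    (br_leibniz_right : ∀ x y z : R, br x (y * z) = y * br x z + br x y * z)
    (br_leibniz_left : ∀ x y z : R, br (x * y) z = x * br y z + br x z * y)
    (N : ℚ) (hN : N ≠ 0)
    (I J : ℕ → R)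
    (hII : ∀ n m : ℕ, 1 ≤ n → 1 ≤ m → br (I n) (I m) = 0)
    (hJI : ∀ n m : ℕ, 1 ≤ n → 1 ≤ m →
      br (J n) (I m) = ((n + m - 1 : ℕ) : R) * I (n + m - 1))
    (hJJ : ∀ n m : ℕ, 1 ≤ n → 1 ≤ m →
      br (J n) (J m) = (((m : ℤ) - (n : ℤ) : ℤ) : R) * J (n + m - 1))
    (q₀ : R) (hq₀ : q₀ = J 1)
    (Jt : ℕ → R)
    (hJt : ∀ n : ℕ, 1 ≤ n → Jt (n + 1) = J (n + 1) - ((n : ℚ) / N) • (q₀ * I n)) :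
    ∀ n m : ℕ, 1 ≤ n → 1 ≤ m →
      br q₀ (I m) = (m : R) * I m ∧ br q₀ (Jt (n + 1)) = (n : R) * Jt (n + 1) := by
  have hq0I : ∀ k : ℕ, 1 ≤ k → br q₀ (I k) = (k : R) * I k := by
    intro k hk
    rw [hq₀, hJI 1 k le_rfl hk]
    have h1 : 1 + k - 1 = k := by omega
    rw [h1]
  have hself : br q₀ q₀ = 0 := by
    rw [hq₀, hJJ 1 1 le_rfl le_rfl]
    simp
  intro n m hn hm
  refine ⟨hq0I m hm, ?_⟩
  rw [hJt n hn, map_sub, map_smul, br_leibniz_right, hself, hq0I n hn, hq₀,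
    hJJ 1 (n + 1) le_rfl (by omega)]
  have h1 : 1 + (n + 1) - 1 = n + 1 := by omega
  rw [h1]
  push_cast
  rw [mul_sub, mul_smul_comm]
  ring_nf
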